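/- arXiv:math/9809210 — 5 statements merged into one kernel-verified Lean document; each statement's English description precedes it below -/
import Mathlib

section
/- Let V = V1 ⊕ V2 ⊕ V3 as above. If G is a maximal isotropic subspace of V that does not split as a direct product of maximal isotropic subspaces of V_i and the complementary sum, then the nonzero elements of each Vi can be labeled P_i, Q_i, R_i so that G = {(0,0,0), (0,Q2,Q3), (Q1,0,Q3), (Q1,Q2,0), (P1,P2,P3), (P1,R2,R3), (R1,P2,R3), (R1,R2,P3)}. -/
/-- The 2-dimensional symplectic space over `𝔽₂`, i.e. the 2-torsion of an elliptic curve. -/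
abbrev TwoTorsion : Type := ZMod 2 × ZMod 2

/-- The unique non-degenerate alternating form on `TwoTorsion`:
`eps x y = 1` iff `x` and `y` are distinct nonzero vectors. -/
def eps (x y : TwoTorsion) : ZMod 2 := x.1 * y.2 + x.2 * y.1

/-- `V = V₁ ⊕ V₂ ⊕ V₃` with each `Vᵢ = TwoTorsion`. -/
abbrev SixSpace : Type := TwoTorsion × TwoTorsion × TwoTorsion

/-- The orthogonal direct sum pairing on two copies of `TwoTorsion`. -/
def eps2 (x y : TwoTorsion × TwoTorsion) : ZMod 2 := eps x.1 y.1 + eps x.2 y.2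

/-- The orthogonal direct sum pairing on `SixSpace`. -/
def bigForm (x y : SixSpace) : ZMod 2 := eps x.1 y.1 + eps x.2.1 y.2.1 + eps x.2.2 y.2.2

def IsotropicV2 (G : Submodule (ZMod 2) TwoTorsion) : Prop :=
  ∀ x ∈ G, ∀ y ∈ G, eps x y = 0

/-- Maximal isotropic subspace of a single factor `Vᵢ`. -/
def MaxIsoV2 (G : Submodule (ZMod 2) TwoTorsion) : Prop :=
  IsotropicV2 G ∧ ∀ G', IsotropicV2 G' → G ≤ G' → G' = G

def IsotropicV4 (G : Submodule (ZMod 2) (TwoTorsion × TwoTorsion)) : Prop :=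
  ∀ x ∈ G, ∀ y ∈ G, eps2 x y = 0

/-- Maximal isotropic subspace of the sum of two of the factors. -/
def MaxIsoV4 (G : Submodule (ZMod 2) (TwoTorsion × TwoTorsion)) : Prop :=
  IsotropicV4 G ∧ ∀ G', IsotropicV4 G' → G ≤ G' → G' = G

def IsotropicV6 (G : Submodule (ZMod 2) SixSpace) : Prop :=
  ∀ x ∈ G, ∀ y ∈ G, bigForm x y = 0

/-- Maximal isotropic subspace of `SixSpace`. -/
def MaxIsoV6 (G : Submodule (ZMod 2) SixSpace) : Prop :=
  IsotropicV6 G ∧ ∀ G', IsotropicV6 G' → G ≤ G' → G' = G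

/-- `G` splits as `G₁ × G₂` with `G₁` a maximal isotropic subspace of some `Vᵢ` and `G₂` a
maximal isotropic subspace of the sum of the other two factors. -/
def Splits (G : Submodule (ZMod 2) SixSpace) : Prop :=
  (∃ S1 S2, MaxIsoV2 S1 ∧ MaxIsoV4 S2 ∧
    ∀ v : SixSpace, v ∈ G ↔ v.1 ∈ S1 ∧ (v.2.1, v.2.2) ∈ S2) ∨
  (∃ S1 S2, MaxIsoV2 S1 ∧ MaxIsoV4 S2 ∧
    ∀ v : SixSpace, v ∈ G ↔ v.2.1 ∈ S1 ∧ (v.1, v.2.2) ∈ S2) ∨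
  (∃ S1 S2, MaxIsoV2 S1 ∧ MaxIsoV4 S2 ∧
    ∀ v : SixSpace, v ∈ G ↔ v.2.2 ∈ S1 ∧ (v.1, v.2.1) ∈ S2)

/-!
A maximal isotropic `G` is its own orthogonal, so it has dimension 3. It contains no nonzero
vector supported on a single factor `Vᵢ`: the line of such a vector times the projection of `G`
to the other two factors would be a splitting. Hence every projection `G → Vᵢ` is onto (an
isotropic image would be orthogonal to such a vector), with kernel a line `{0, kᵢ}` whose
generator has both other coordinates nonzero. Orthogonality of `k₁ = (0, Q₂, Q₃)` and
`k₂ = (Q₁, 0, Q₃')` forces `Q₃' = Q₃`. Orthogonality to `k₁` and `k₂` shows that an element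
`(P₁, P₂, P₃)` of `G` with `P₁ ∉ {0, Q₁}` has `Pᵢ ∉ {0, Qᵢ}` for every `i`, and `G` is the span of
`k₁`, `k₂` and this element, which is the displayed group with `Rᵢ = Pᵢ + Qᵢ`.
-/

open Module

lemma eps_zero_left (x : TwoTorsion) : eps 0 x = 0 := by simp [eps]

lemma eps_zero_right (x : TwoTorsion) : eps x 0 = 0 := by simp [eps]

lemma eps_self (x : TwoTorsion) : eps x x = 0 := by simp only [eps]; grind

lemma eps_comm (x y : TwoTorsion) : eps x y = eps y x := by simp only [eps]; ring

lemma eq_zero_or_eq_of_eps_eq_zero {a x : TwoTorsion} (ha : a ≠ 0) (h : eps a x = 0) :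
    x = 0 ∨ x = a := by
  revert a x; decide

lemma eps_eq_zero_of_eps_eq_zero {a x y : TwoTorsion} (ha : a ≠ 0) (hx : eps a x = 0)
    (hy : eps a y = 0) : eps x y = 0 := by
  revert a x y; decide

lemma exists_eps_ne_zero {a : TwoTorsion} (ha : a ≠ 0) : ∃ b, eps a b ≠ 0 := by
  revert a; decide

lemma eq_zero_or_eq_or_eq_or_eq_add_of_eps_ne_zero {x y : TwoTorsion} (h : eps x y ≠ 0)
    (w : TwoTorsion) : w = 0 ∨ w = x ∨ w = y ∨ w = x + y := by
  revert x y w; decide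

set_option synthInstance.maxSize 2000 in
lemma triple_eq_nonzero_of_eps_ne_zero {Q P : TwoTorsion} (h : eps Q P ≠ 0) :
    ({P, Q, P + Q} : Set TwoTorsion) = {v | v ≠ 0} ∧ P ≠ Q ∧ Q ≠ P + Q ∧ P ≠ P + Q := by
  have key : ∀ Q P x : TwoTorsion, eps Q P ≠ 0 →
      ((x = P ∨ x = Q ∨ x = P + Q) ↔ x ≠ 0) ∧ P ≠ Q ∧ Q ≠ P + Q ∧ P ≠ P + Q := by
    decide
  exact ⟨Set.ext fun x => (key Q P x h).1, (key Q P 0 h).2⟩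

lemma mem_span_singleton_iff_eps_eq_zero {a x : TwoTorsion} (ha : a ≠ 0) :
    x ∈ Submodule.span (ZMod 2) {a} ↔ eps a x = 0 := by
  rw [Submodule.mem_span_singleton]
  constructor
  · rintro ⟨c, rfl⟩
    simp only [eps, Prod.smul_fst, Prod.smul_snd, smul_eq_mul]
    grind
  · intro h
    rcases eq_zero_or_eq_of_eps_eq_zero ha h with rfl | rfl
    exacts [⟨0, zero_smul _ _⟩, ⟨1, one_smul _ _⟩]

lemma maxIsoV2_span_singleton {a : TwoTorsion} (ha : a ≠ 0) :
    MaxIsoV2 (Submodule.span (ZMod 2) {a}) := by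
  simp only [MaxIsoV2, IsotropicV2, mem_span_singleton_iff_eps_eq_zero ha]
  refine ⟨fun x hx y hy => eps_eq_zero_of_eps_eq_zero ha hx hy, fun S hS hle => ?_⟩
  have haS : a ∈ S := hle ((mem_span_singleton_iff_eps_eq_zero ha).2 (eps_self a))
  refine le_antisymm (fun x hx => ?_) hle
  exact (mem_span_singleton_iff_eps_eq_zero ha).2 (hS a haS x hx)

lemma eps2_zero_left (y : TwoTorsion × TwoTorsion) : eps2 0 y = 0 := by
  simp [eps2, eps_zero_left]

section BigForm

def bigFormBilin : LinearMap.BilinForm (ZMod 2) SixSpace :=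
  LinearMap.mk₂ (ZMod 2) bigForm
    (fun x y z => by simp only [bigForm, eps, Prod.fst_add, Prod.snd_add]; ring)
    (fun c x y => by simp only [bigForm, eps, Prod.smul_fst, Prod.smul_snd, smul_eq_mul]; ring)
    (fun x y z => by simp only [bigForm, eps, Prod.fst_add, Prod.snd_add]; ring)
    (fun c x y => by simp only [bigForm, eps, Prod.smul_fst, Prod.smul_snd, smul_eq_mul]; ring)

lemma bigFormBilin_apply (x y : SixSpace) : bigFormBilin x y = bigForm x y := rfl

lemma bigForm_comm (x y : SixSpace) : bigForm x y = bigForm y x := by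
  simp only [bigForm, eps_comm x.1, eps_comm x.2.1, eps_comm x.2.2]

lemma bigForm_self (x : SixSpace) : bigForm x x = 0 := by
  simp [bigForm, eps_self]

lemma bigFormBilin_nondegenerate : bigFormBilin.Nondegenerate := by
  have key : ∀ x : SixSpace, (∀ y, bigForm x y = 0) → x = 0 := by decide
  exact ⟨fun x hx => key x hx, fun x hx => key x fun y => (bigForm_comm x y).trans (hx y)⟩

variable {G : Submodule (ZMod 2) SixSpace}

lemma mem_of_forall_bigForm_eq_zero (hmax : MaxIsoV6 G) {x : SixSpace}
    (hx : ∀ y ∈ G, bigForm x y = 0) : x ∈ G := by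
  have hiso : IsotropicV6 (G ⊔ Submodule.span (ZMod 2) {x}) := by
    intro u hu v hv
    obtain ⟨g, hg, _, hc, rfl⟩ := Submodule.mem_sup.1 hu
    obtain ⟨h, hh, _, hd, rfl⟩ := Submodule.mem_sup.1 hv
    obtain ⟨c, rfl⟩ := Submodule.mem_span_singleton.1 hc
    obtain ⟨d, rfl⟩ := Submodule.mem_span_singleton.1 hd
    rw [← bigFormBilin_apply]
    simp only [map_add, map_smul, LinearMap.add_apply, LinearMap.smul_apply, bigFormBilin_apply,
      hmax.1 g hg h hh, hx h hh, bigForm_comm g x, hx g hg, bigForm_self, smul_zero, add_zero]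
  rw [← hmax.2 _ hiso le_sup_left]
  exact Submodule.mem_sup_right (Submodule.mem_span_singleton_self x)

lemma orthogonal_eq_self (hmax : MaxIsoV6 G) : bigFormBilin.orthogonal G = G :=
  le_antisymm
    (fun x hx => mem_of_forall_bigForm_eq_zero hmax fun y hy => (bigForm_comm x y).trans (hx y hy))
    (fun x hx y hy => hmax.1 y hy x hx)

lemma finrank_eq_three (hmax : MaxIsoV6 G) : finrank (ZMod 2) G = 3 := by
  have h := LinearMap.BilinForm.finrank_orthogonal bigFormBilin_nondegenerate G
  rw [orthogonal_eq_self hmax] at h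
  have h6 : finrank (ZMod 2) SixSpace = 6 := by simp
  omega

end BigForm

section Slot

/-- `e` identifies `V` with `Vᵢ ⊕ (⊕_{j ≠ i} Vⱼ)` for some `i`, as symplectic spaces. -/
def IsSlot (e : SixSpace ≃ₗ[ZMod 2] TwoTorsion × (TwoTorsion × TwoTorsion)) : Prop :=
  ∀ x y, bigForm x y = eps (e x).1 (e y).1 + eps2 (e x).2 (e y).2

def SplitsAt (e : SixSpace ≃ₗ[ZMod 2] TwoTorsion × (TwoTorsion × TwoTorsion))
    (G : Submodule (ZMod 2) SixSpace) : Prop :=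
  ∃ S1 S2, MaxIsoV2 S1 ∧ MaxIsoV4 S2 ∧ ∀ v, v ∈ G ↔ (e v).1 ∈ S1 ∧ (e v).2 ∈ S2

variable {e : SixSpace ≃ₗ[ZMod 2] TwoTorsion × (TwoTorsion × TwoTorsion)}
  {G : Submodule (ZMod 2) SixSpace}

lemma IsSlot.bigForm_symm_inl (he : IsSlot e) (a : TwoTorsion) (y : SixSpace) :
    bigForm (e.symm (a, 0)) y = eps a (e y).1 := by
  rw [he, e.apply_symm_apply, eps2_zero_left, add_zero]

lemma IsSlot.bigForm_symm_inr (he : IsSlot e) (x : TwoTorsion × TwoTorsion) (y : SixSpace) :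
    bigForm (e.symm (0, x)) y = eps2 x (e y).2 := by
  rw [he, e.apply_symm_apply, eps_zero_left, zero_add]

lemma IsSlot.splitsAt_of_symm_mem (he : IsSlot e) (hmax : MaxIsoV6 G) {a : TwoTorsion}
    (ha : a ≠ 0) (hmem : e.symm (a, 0) ∈ G) : SplitsAt e G := by
  set S1 := Submodule.span (ZMod 2) {a}
  have hS1 : ∀ g ∈ G, (e g).1 ∈ S1 := fun g hg =>
    (mem_span_singleton_iff_eps_eq_zero ha).2 <|
      (he.bigForm_symm_inl a g).symm.trans (hmax.1 _ hmem g hg)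
  have hiso1 := (maxIsoV2_span_singleton ha).1
  set π := (LinearMap.snd (ZMod 2) _ _).comp e.toLinearMap
  have heps2 : ∀ g ∈ G, ∀ h ∈ G, eps2 (e g).2 (e h).2 = 0 := fun g hg h hh => by
    have h0 := hmax.1 g hg h hh
    rwa [he, hiso1 _ (hS1 g hg) _ (hS1 h hh), zero_add] at h0
  refine ⟨S1, G.map π, maxIsoV2_span_singleton ha, ⟨?_, fun S2 hS2 hle => ?_⟩, fun v => ⟨?_, ?_⟩⟩
  · rintro _ ⟨g, hg, rfl⟩ _ ⟨h, hh, rfl⟩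
    exact heps2 g hg h hh
  · refine le_antisymm (fun x hx => ⟨e.symm (0, x), mem_of_forall_bigForm_eq_zero hmax ?_, ?_⟩) hle
    · intro y hy
      rw [he.bigForm_symm_inr]
      exact hS2 x hx _ (hle ⟨y, hy, rfl⟩)
    · simp [π]
  · exact fun hv => ⟨hS1 v hv, v, hv, rfl⟩
  · rintro ⟨hv1, g, hg, hgv⟩
    refine mem_of_forall_bigForm_eq_zero hmax fun y hy => ?_
    have hgv : (e g).2 = (e v).2 := hgv
    rw [he, ← hgv, hiso1 _ hv1 _ (hS1 y hy), heps2 g hg y hy, add_zero]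

lemma IsSlot.exists_fst_eq (he : IsSlot e) (hmax : MaxIsoV6 G)
    (hpure : ∀ a ≠ 0, e.symm (a, 0) ∉ G) (w : TwoTorsion) : ∃ g ∈ G, (e g).1 = w := by
  by_cases hiso : ∀ g ∈ G, ∀ h ∈ G, eps (e g).1 (e h).1 = 0
  · exfalso
    obtain ⟨a, ha, hperp⟩ : ∃ a ≠ 0, ∀ g ∈ G, eps a (e g).1 = 0 := by
      by_cases hG : ∃ g ∈ G, (e g).1 ≠ 0
      · obtain ⟨g, hg, hg0⟩ := hG
        exact ⟨(e g).1, hg0, hiso g hg⟩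
      · push Not at hG
        exact ⟨(1, 0), by decide, fun g hg => by rw [hG g hg, eps_zero_right]⟩
    exact hpure a ha (mem_of_forall_bigForm_eq_zero hmax fun y hy => by
      rw [he.bigForm_symm_inl]; exact hperp y hy)
  · push Not at hiso
    obtain ⟨g, hg, h, hh, hgh⟩ := hiso
    rcases eq_zero_or_eq_or_eq_or_eq_add_of_eps_ne_zero hgh w with rfl | rfl | rfl | rfl
    · exact ⟨0, G.zero_mem, by simp⟩
    · exact ⟨g, hg, rfl⟩
    · exact ⟨h, hh, rfl⟩
    · exact ⟨g + h, G.add_mem hg hh, by simp⟩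

lemma eq_zero_of_snd_eq_zero (hpure : ∀ a ≠ 0, e.symm (a, 0) ∉ G) {z : SixSpace} (hz : z ∈ G)
    (h : (e z).2 = 0) : z = 0 := by
  by_contra hz0
  have hz1 : (e z).1 ≠ 0 := fun h1 => hz0 (e.map_eq_zero_iff.1 (Prod.ext h1 h))
  refine hpure _ hz1 ?_
  rwa [← h, e.symm_apply_apply]

lemma exists_ker_fst (hmax : MaxIsoV6 G) (hsurj : ∀ w, ∃ g ∈ G, (e g).1 = w) :
    ∃ k ∈ G, k ≠ 0 ∧ (e k).1 = 0 ∧ ∀ z ∈ G, (e z).1 = 0 → z = 0 ∨ z = k := by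
  set f : G →ₗ[ZMod 2] TwoTorsion :=
    ((LinearMap.fst (ZMod 2) _ _).comp e.toLinearMap).domRestrict G
  have hrange : LinearMap.range f = ⊤ := by
    refine eq_top_iff.2 fun w _ => ?_
    obtain ⟨g, hg, rfl⟩ := hsurj w
    exact ⟨⟨g, hg⟩, rfl⟩
  have hker : finrank (ZMod 2) (LinearMap.ker f) = 1 := by
    have h := f.finrank_range_add_finrank_ker
    rw [hrange, finrank_top, finrank_eq_three hmax] at h
    have h2 : finrank (ZMod 2) TwoTorsion = 2 := by simp
    omega
  obtain ⟨k, hk0, hk⟩ := finrank_eq_one_iff'.1 hker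
  refine ⟨k, (k : G).2, fun h => hk0 (Subtype.ext (Subtype.ext h)), k.2, fun z hz hz1 => ?_⟩
  obtain ⟨c, hc⟩ := hk ⟨⟨z, hz⟩, hz1⟩
  have hc' : c • (k : SixSpace) = z := congrArg (fun x : LinearMap.ker f => ((x : G) : SixSpace)) hc
  obtain rfl | rfl : c = 0 ∨ c = 1 := by clear hc hc'; revert c; decide
  · exact .inl (hc'.symm.trans (zero_smul _ _))
  · exact .inr (hc'.symm.trans (one_smul _ _))

end Slot

@[simps]
def slot₁ : SixSpace ≃ₗ[ZMod 2] TwoTorsion × (TwoTorsion × TwoTorsion) where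
  toFun v := v
  invFun w := w
  map_add' _ _ := rfl
  map_smul' _ _ := rfl
  left_inv _ := rfl
  right_inv _ := rfl

@[simps]
def slot₂ : SixSpace ≃ₗ[ZMod 2] TwoTorsion × (TwoTorsion × TwoTorsion) where
  toFun v := (v.2.1, v.1, v.2.2)
  invFun w := (w.2.1, w.1, w.2.2)
  map_add' _ _ := rfl
  map_smul' _ _ := rfl
  left_inv _ := rfl
  right_inv _ := rfl

@[simps]
def slot₃ : SixSpace ≃ₗ[ZMod 2] TwoTorsion × (TwoTorsion × TwoTorsion) where
  toFun v := (v.2.2, v.1, v.2.1)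
  invFun w := (w.2.1, w.2.2, w.1)
  map_add' _ _ := rfl
  map_smul' _ _ := rfl
  left_inv _ := rfl
  right_inv _ := rfl

lemma isSlot_slot₁ : IsSlot slot₁ := fun x y => by
  simp only [bigForm, eps2, slot₁_apply]; ring

lemma isSlot_slot₂ : IsSlot slot₂ := fun x y => by
  simp only [bigForm, eps2, slot₂_apply]; ring

lemma isSlot_slot₃ : IsSlot slot₃ := fun x y => by
  simp only [bigForm, eps2, slot₃_apply]; ring

lemma splits_iff (G : Submodule (ZMod 2) SixSpace) :
    Splits G ↔ SplitsAt slot₁ G ∨ SplitsAt slot₂ G ∨ SplitsAt slot₃ G :=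
  Iff.rfl

section Generators

variable {G : Submodule (ZMod 2) SixSpace}

lemma exists_generators (hmax : MaxIsoV6 G) (hns : ¬ Splits G) :
    ∃ Q₁ Q₂ Q₃ P₁ P₂ P₃ : TwoTorsion, eps Q₁ P₁ ≠ 0 ∧ eps Q₂ P₂ ≠ 0 ∧ eps Q₃ P₃ ≠ 0 ∧
      ((0, Q₂, Q₃) : SixSpace) ∈ G ∧ ((Q₁, 0, Q₃) : SixSpace) ∈ G ∧
      ((P₁, P₂, P₃) : SixSpace) ∈ G ∧ ∀ z ∈ G, z.1 = 0 → z = 0 ∨ z = (0, Q₂, Q₃) := by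
  rw [splits_iff] at hns
  have hpure₁ : ∀ a ≠ 0, slot₁.symm (a, 0) ∉ G := fun a ha h =>
    hns (.inl (isSlot_slot₁.splitsAt_of_symm_mem hmax ha h))
  have hpure₂ : ∀ a ≠ 0, slot₂.symm (a, 0) ∉ G := fun a ha h =>
    hns (.inr (.inl (isSlot_slot₂.splitsAt_of_symm_mem hmax ha h)))
  have hpure₃ : ∀ a ≠ 0, slot₃.symm (a, 0) ∉ G := fun a ha h =>
    hns (.inr (.inr (isSlot_slot₃.splitsAt_of_symm_mem hmax ha h)))
  have hsurj₁ := isSlot_slot₁.exists_fst_eq hmax hpure₁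
  obtain ⟨⟨u₁, u₂, u₃⟩, hu, hu0, hu₁ : u₁ = 0, hker⟩ := exists_ker_fst hmax hsurj₁
  obtain ⟨⟨v₁, v₂, v₃⟩, hv, hv0, hv₂ : v₂ = 0, -⟩ :=
    exists_ker_fst hmax (isSlot_slot₂.exists_fst_eq hmax hpure₂)
  subst hu₁ hv₂
  -- a nonzero vector of `G` has at least two nonzero coordinates
  have hu₂ : u₂ ≠ 0 := fun h => hu0 (eq_zero_of_snd_eq_zero hpure₃ hu (by simp [slot₃, h]))
  have hu₃ : u₃ ≠ 0 := fun h => hu0 (eq_zero_of_snd_eq_zero hpure₂ hu (by simp [slot₂, h]))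
  have hv₁ : v₁ ≠ 0 := fun h => hv0 (eq_zero_of_snd_eq_zero hpure₃ hv (by simp [slot₃, h]))
  have hv₃ : v₃ ≠ 0 := fun h => hv0 (eq_zero_of_snd_eq_zero hpure₁ hv (by simp [slot₁, h]))
  have huv : eps u₃ v₃ = 0 := by
    simpa [bigForm, eps_zero_left, eps_zero_right] using hmax.1 _ hu _ hv
  obtain rfl : v₃ = u₃ := (eq_zero_or_eq_of_eps_eq_zero hu₃ huv).resolve_left hv₃
  obtain ⟨P₁, hP₁⟩ := exists_eps_ne_zero hv₁
  obtain ⟨⟨t₁, t₂, t₃⟩, ht, rfl : t₁ = P₁⟩ := hsurj₁ P₁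
  have hut : eps u₂ t₂ = eps v₃ t₃ := CharTwo.add_eq_zero.1 <| by
    simpa [bigForm, eps_zero_left] using hmax.1 _ hu _ ht
  have hvt : eps v₁ t₁ = eps v₃ t₃ := CharTwo.add_eq_zero.1 <| by
    simpa [bigForm, eps_zero_left] using hmax.1 _ hv _ ht
  exact ⟨v₁, u₂, v₃, t₁, t₂, t₃, hP₁, hut ▸ hvt ▸ hP₁, hvt ▸ hP₁, hu, hv, ht, hker⟩

lemma coe_eq_of_generators {Q₁ Q₂ Q₃ P₁ P₂ P₃ : TwoTorsion} (hQP : eps Q₁ P₁ ≠ 0)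
    (hu : ((0, Q₂, Q₃) : SixSpace) ∈ G) (hv : ((Q₁, 0, Q₃) : SixSpace) ∈ G)
    (ht : ((P₁, P₂, P₃) : SixSpace) ∈ G) (hker : ∀ z ∈ G, z.1 = 0 → z = 0 ∨ z = (0, Q₂, Q₃)) :
    (G : Set SixSpace) =
      {(0, 0, 0), (0, Q₂, Q₃), (Q₁, 0, Q₃), (Q₁, Q₂, 0), (P₁, P₂, P₃), (P₁, P₂ + Q₂, P₃ + Q₃),
        (P₁ + Q₁, P₂, P₃ + Q₃), (P₁ + Q₁, P₂ + Q₂, P₃)} := by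
  have hcoset : ∀ z ∈ G, ∀ s ∈ G, z.1 = s.1 → z = s ∨ z = s + (0, Q₂, Q₃) := by
    intro z hz s hs h
    rcases hker (z + s) (G.add_mem hz hs) (by simp [h, ZModModule.add_self]) with h' | h'
    · exact .inl (CharTwo.add_eq_zero.1 h')
    · rw [← h', add_left_comm, ZModModule.add_self, add_zero]
      exact .inr rfl
  ext z
  simp only [SetLike.mem_coe]
  constructor
  · intro hz
    obtain ⟨s, hs, h1, hs'⟩ : ∃ s ∈ G, z.1 = s.1 ∧
        (s = 0 ∨ s = (Q₁, 0, Q₃) ∨ s = (P₁, P₂, P₃) ∨ s = (P₁ + Q₁, P₂, P₃ + Q₃)) := by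
      rcases eq_zero_or_eq_or_eq_or_eq_add_of_eps_ne_zero hQP z.1 with h | h | h | h
      · exact ⟨0, G.zero_mem, h, .inl rfl⟩
      · exact ⟨_, hv, h, .inr (.inl rfl)⟩
      · exact ⟨_, ht, h, .inr (.inr (.inl rfl))⟩
      · exact ⟨_, G.add_mem ht hv, h.trans (add_comm _ _), .inr (.inr (.inr (by simp)))⟩
    rcases hcoset z hz s hs h1 with rfl | rfl <;> rcases hs' with rfl | rfl | rfl | rfl <;>
      simp only [Prod.mk_add_mk, add_zero, zero_add, add_assoc, ZModModule.add_self,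
        Prod.mk_zero_zero, Set.mem_insert_iff, Set.mem_singleton_iff, true_or, or_true]
  · rintro (rfl | rfl | rfl | rfl | rfl | rfl | rfl | rfl)
    · exact G.zero_mem
    · exact hu
    · exact hv
    · simpa [ZModModule.add_self] using G.add_mem hv hu
    · exact ht
    · simpa using G.add_mem ht hu
    · simpa using G.add_mem ht hv
    · simpa [ZModModule.add_self] using G.add_mem ht (G.add_mem hv hu)

end Generators

/-- A non-split maximal isotropic subspace of `V₁ ⊕ V₂ ⊕ V₃` is, after labeling the nonzero
elements of each `Vᵢ` as `Pᵢ, Qᵢ, Rᵢ`, the group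
`{0, (0,Q₂,Q₃), (Q₁,0,Q₃), (Q₁,Q₂,0), (P₁,P₂,P₃), (P₁,R₂,R₃), (R₁,P₂,R₃), (R₁,R₂,P₃)}`. -/
theorem stmt2 (G : Submodule (ZMod 2) SixSpace) (hmax : MaxIsoV6 G) (hns : ¬ Splits G) :
    ∃ P₁ Q₁ R₁ P₂ Q₂ R₂ P₃ Q₃ R₃ : TwoTorsion,
      ({P₁, Q₁, R₁} : Set TwoTorsion) = {v | v ≠ 0} ∧
      ({P₂, Q₂, R₂} : Set TwoTorsion) = {v | v ≠ 0} ∧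
      ({P₃, Q₃, R₃} : Set TwoTorsion) = {v | v ≠ 0} ∧
      P₁ ≠ Q₁ ∧ Q₁ ≠ R₁ ∧ P₁ ≠ R₁ ∧
      P₂ ≠ Q₂ ∧ Q₂ ≠ R₂ ∧ P₂ ≠ R₂ ∧
      P₃ ≠ Q₃ ∧ Q₃ ≠ R₃ ∧ P₃ ≠ R₃ ∧
      (G : Set SixSpace) =
        {(0, 0, 0), (0, Q₂, Q₃), (Q₁, 0, Q₃), (Q₁, Q₂, 0),
         (P₁, P₂, P₃), (P₁, R₂, R₃), (R₁, P₂, R₃), (R₁, R₂, P₃)} := by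
  obtain ⟨Q₁, Q₂, Q₃, P₁, P₂, P₃, h₁, h₂, h₃, hu, hv, ht, hker⟩ := exists_generators hmax hns
  obtain ⟨hl₁, hd₁⟩ := triple_eq_nonzero_of_eps_ne_zero h₁
  obtain ⟨hl₂, hd₂⟩ := triple_eq_nonzero_of_eps_ne_zero h₂
  obtain ⟨hl₃, hd₃⟩ := triple_eq_nonzero_of_eps_ne_zero h₃
  exact ⟨P₁, Q₁, P₁ + Q₁, P₂, Q₂, P₂ + Q₂, P₃, Q₃, P₃ + Q₃, hl₁, hl₂, hl₃, hd₁.1, hd₁.2.1,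
    hd₁.2.2, hd₂.1, hd₂.2.1, hd₂.2.2, hd₃.1, hd₃.2.1, hd₃.2.2, coe_eq_of_generators h₁ hu hv ht hker⟩
end

section
/- A plane quartic curve aX^4 + bY^4 + cZ^4 + dX^2Y^2 + eX^2Z^2 + fY^2Z^2 = 0 over a field of characteristic not 2 is nonsingular if and only if the seven numbers a, b, c, d^2−4ab, e^2−4ac, f^2−4bc, and af^2+be^2+cd^2−4abc−def are all nonzero. -/
private lemma mul2_eq_zero {K : Type*} [Field K] (h2 : (2:K) ≠ 0) {u v : K}
    (h : 2*u*v = 0) : u = 0 ∨ v = 0 := by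
  rcases mul_eq_zero.mp h with h' | h'
  · rcases mul_eq_zero.mp h' with h'' | h''
    · exact absurd h'' h2
    · exact Or.inl h''
  · exact Or.inr h'

private lemma cancel_sq {K : Type*} [Field K] {w z : K} (hw : w ≠ 0)
    (h : w * z^2 = 0) : z = 0 := by
  rcases mul_eq_zero.mp h with h' | h'
  · exact absurd h' hw
  · exact (pow_eq_zero_iff (two_ne_zero)).mp h'

/-- A plane quartic `aX⁴ + bY⁴ + cZ⁴ + dX²Y² + eX²Z² + fY²Z² = 0` over a field of
characteristic not 2 is nonsingular (no singular projective point over an algebraic closure,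
here taken to be the algebraically closed field `K` itself) if and only if the seven numbers
`a`, `b`, `c`, `d²−4ab`, `e²−4ac`, `f²−4bc`, `af²+be²+cd²−4abc−def` are all nonzero. -/
theorem stmt4 (K : Type*) [Field K] [IsAlgClosed K] (h2 : (2 : K) ≠ 0) (a b c d e f : K) :
    (∀ X Y Z : K,
        a*X^4 + b*Y^4 + c*Z^4 + d*X^2*Y^2 + e*X^2*Z^2 + f*Y^2*Z^2 = 0 →
        4*a*X^3 + 2*d*X*Y^2 + 2*e*X*Z^2 = 0 →
        4*b*Y^3 + 2*d*X^2*Y + 2*f*Y*Z^2 = 0 →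
        4*c*Z^3 + 2*e*X^2*Z + 2*f*Y^2*Z = 0 →
        X = 0 ∧ Y = 0 ∧ Z = 0) ↔
      (a ≠ 0 ∧ b ≠ 0 ∧ c ≠ 0 ∧ d^2 - 4*a*b ≠ 0 ∧ e^2 - 4*a*c ≠ 0 ∧ f^2 - 4*b*c ≠ 0 ∧
        a*f^2 + b*e^2 + c*d^2 - 4*a*b*c - d*e*f ≠ 0) := by
  constructor
  · intro H
    have ha : a ≠ 0 := by
      intro h0
      obtain ⟨h1, -, -⟩ := H 1 0 0 (by linear_combination h0) (by linear_combination 4*h0)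
        (by ring) (by ring)
      exact one_ne_zero h1
    have hb : b ≠ 0 := by
      intro h0
      obtain ⟨-, h1, -⟩ := H 0 1 0 (by linear_combination h0) (by ring)
        (by linear_combination 4*h0) (by ring)
      exact one_ne_zero h1
    have hc : c ≠ 0 := by
      intro h0
      obtain ⟨-, -, h1⟩ := H 0 0 1 (by linear_combination h0) (by ring) (by ring)
        (by linear_combination 4*h0)
      exact one_ne_zero h1
    have sqrt_ne : ∀ t : K, t ≠ 0 → ∀ Y : K, Y^2 = t → Y ≠ 0 := by
      intro t ht Y hY h0
      apply ht
      rw [← hY, h0]; ring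
    have n2a : -(2*a) ≠ 0 := by
      rw [neg_ne_zero]; exact mul_ne_zero h2 ha
    have n2b : -(2*b) ≠ 0 := by
      rw [neg_ne_zero]; exact mul_ne_zero h2 hb
    have hd : d^2 - 4*a*b ≠ 0 := by
      intro h0
      obtain ⟨X, hX⟩ := IsAlgClosed.exists_pow_nat_eq (k := K) d zero_lt_two
      obtain ⟨Y, hY⟩ := IsAlgClosed.exists_pow_nat_eq (k := K) (-(2*a)) zero_lt_two
      obtain ⟨-, hY0, -⟩ := H X Y 0
        (by linear_combination (a*(X^2+d) + d*Y^2)*hX + (b*(Y^2-2*a) + d^2)*hY + (-a)*h0)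
        (by linear_combination (4*a*X)*hX + (2*d*X)*hY)
        (by linear_combination (4*b*Y)*hY + (2*d*Y)*hX + (2*Y)*h0)
        (by ring)
      exact sqrt_ne _ n2a Y hY hY0
    have he : e^2 - 4*a*c ≠ 0 := by
      intro h0
      obtain ⟨X, hX⟩ := IsAlgClosed.exists_pow_nat_eq (k := K) e zero_lt_two
      obtain ⟨Z, hZ⟩ := IsAlgClosed.exists_pow_nat_eq (k := K) (-(2*a)) zero_lt_two
      obtain ⟨-, -, hZ0⟩ := H X 0 Z
        (by linear_combination (a*(X^2+e) + e*Z^2)*hX + (c*(Z^2-2*a) + e^2)*hZ + (-a)*h0)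
        (by linear_combination (4*a*X)*hX + (2*e*X)*hZ)
        (by ring)
        (by linear_combination (4*c*Z)*hZ + (2*e*Z)*hX + (2*Z)*h0)
      exact sqrt_ne _ n2a Z hZ hZ0
    have hf : f^2 - 4*b*c ≠ 0 := by
      intro h0
      obtain ⟨Y, hY⟩ := IsAlgClosed.exists_pow_nat_eq (k := K) f zero_lt_two
      obtain ⟨Z, hZ⟩ := IsAlgClosed.exists_pow_nat_eq (k := K) (-(2*b)) zero_lt_two
      obtain ⟨-, -, hZ0⟩ := H 0 Y Z
        (by linear_combination (b*(Y^2+f) + f*Z^2)*hY + (c*(Z^2-2*b) + f^2)*hZ + (-b)*h0)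
        (by ring)
        (by linear_combination (4*b*Y)*hY + (2*f*Y)*hZ)
        (by linear_combination (4*c*Z)*hZ + (2*f*Z)*hY + (2*Z)*h0)
      exact sqrt_ne _ n2b Z hZ hZ0
    have hD : a*f^2 + b*e^2 + c*d^2 - 4*a*b*c - d*e*f ≠ 0 := by
      intro h0
      obtain ⟨X, hX⟩ := IsAlgClosed.exists_pow_nat_eq (k := K) (4*b*c - f^2) zero_lt_two
      obtain ⟨Y, hY⟩ := IsAlgClosed.exists_pow_nat_eq (k := K) (e*f - 2*c*d) zero_lt_two
      obtain ⟨Z, hZ⟩ := IsAlgClosed.exists_pow_nat_eq (k := K) (d*f - 2*b*e) zero_lt_two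
      have hxne : 4*b*c - f^2 ≠ 0 := by
        intro h'; exact hf (by linear_combination -h')
      obtain ⟨hX0, -, -⟩ := H X Y Z
        (by linear_combination (a*(X^2 + (4*b*c - f^2)) + d*Y^2 + e*Z^2)*hX
            + (b*(Y^2 + (e*f - 2*c*d)) + d*(4*b*c - f^2) + f*Z^2)*hY
            + (c*(Z^2 + (d*f - 2*b*e)) + e*(4*b*c - f^2) + f*(e*f - 2*c*d))*hZ
            + (f^2 - 4*b*c)*h0)
        (by linear_combination (4*a*X)*hX + (2*d*X)*hY + (2*e*X)*hZ + (-4*X)*h0)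
        (by linear_combination (2*d*Y)*hX + (4*b*Y)*hY + (2*f*Y)*hZ)
        (by linear_combination (2*e*Z)*hX + (2*f*Z)*hY + (4*c*Z)*hZ)
      exact sqrt_ne _ hxne X hX hX0
    exact ⟨ha, hb, hc, hd, he, hf, hD⟩
  · rintro ⟨ha, hb, hc, hd, he, hf, hD⟩ X Y Z hF hFX hFY hFZ
    have hx := mul2_eq_zero h2 (show 2*X*(2*a*X^2 + d*Y^2 + e*Z^2) = 0 by
      linear_combination hFX)
    have hy := mul2_eq_zero h2 (show 2*Y*(d*X^2 + 2*b*Y^2 + f*Z^2) = 0 by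
      linear_combination hFY)
    have hz := mul2_eq_zero h2 (show 2*Z*(e*X^2 + f*Y^2 + 2*c*Z^2) = 0 by
      linear_combination hFZ)
    rcases hx with hX0 | hP <;> rcases hy with hY0 | hQ <;> rcases hz with hZ0 | hR
    · exact ⟨hX0, hY0, hZ0⟩
    · refine ⟨hX0, hY0, cancel_sq (mul_ne_zero h2 hc) ?_⟩
      linear_combination hR - e*X*hX0 - f*Y*hY0
    · refine ⟨hX0, cancel_sq (mul_ne_zero h2 hb) ?_, hZ0⟩
      linear_combination hQ - d*X*hX0 - f*Z*hZ0
    · refine ⟨hX0, ?_, ?_⟩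
      · exact cancel_sq hf (by linear_combination f*hR - 2*c*hQ + (2*c*d - e*f)*X*hX0)
      · exact cancel_sq hf (by linear_combination f*hQ - 2*b*hR + (2*b*e - d*f)*X*hX0)
    · refine ⟨cancel_sq (mul_ne_zero h2 ha) ?_, hY0, hZ0⟩
      linear_combination hP - d*Y*hY0 - e*Z*hZ0
    · refine ⟨?_, hY0, ?_⟩
      · exact cancel_sq he (by linear_combination e*hR - 2*c*hP + (2*c*d - e*f)*Y*hY0)
      · exact cancel_sq he (by linear_combination e*hP - 2*a*hR + (2*a*f - d*e)*Y*hY0)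
    · refine ⟨?_, ?_, hZ0⟩
      · exact cancel_sq hd (by linear_combination d*hQ - 2*b*hP + (2*b*e - d*f)*Z*hZ0)
      · exact cancel_sq hd (by linear_combination d*hP - 2*a*hQ + (2*a*f - d*e)*Z*hZ0)
    · have h2D : 2*(a*f^2 + b*e^2 + c*d^2 - 4*a*b*c - d*e*f) ≠ 0 :=
        mul_ne_zero h2 hD
      refine ⟨?_, ?_, ?_⟩
      · exact cancel_sq h2D (by
          linear_combination (f^2 - 4*b*c)*hP + (2*c*d - e*f)*hQ + (2*b*e - d*f)*hR)
      · exact cancel_sq h2D (by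
          linear_combination (2*c*d - e*f)*hP + (e^2 - 4*a*c)*hQ + (2*a*f - d*e)*hR)
      · exact cancel_sq h2D (by
          linear_combination (2*b*e - d*f)*hP + (2*a*f - d*e)*hQ + (d^2 - 4*a*b)*hR)
end

section
/- Let k be a field of characteristic neither 2 nor 3, and let E: y^2 = x^3 + Ax + B be an elliptic curve over k with A ≠ 0, B ≠ 0, and with no k-rational 2-torsion point (i.e., x^3+Ax+B irreducible over k). If r is a root of x^3 + Ax + B in an algebraic closure, then s = −(B/(Ar))^2 is a root of x^3 + (x − B^2/A^3)^2, and k(r) = k(s). -/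
/-!
If `r³ + a r + b = 0` then `r (r² + a) = -b`, so `r = -b / (r² + a)` lies in `k(r²)` as soon
as `b ≠ 0`; hence `k(r) = k(r²)`. Since `s = -(b/a)² / r²`, also `k(s) = k(r²)`. That `s` is a
root of `x³ + (x - b²/a³)²` is a polynomial identity modulo the cubic relation.
-/

open scoped IntermediateField

theorem cubic_root_transform_eq_zero {K : Type*} [Field K] {a b r : K}
    (hr : r ^ 3 + a * r + b = 0) :
    (-(b / (a * r)) ^ 2) ^ 3 + (-(b / (a * r)) ^ 2 - b ^ 2 / a ^ 3) ^ 2 = 0 := by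
  rcases eq_or_ne a 0 with rfl | ha
  · simp
  rcases eq_or_ne r 0 with rfl | hr0
  · obtain rfl : b = 0 := by simpa using hr
    simp
  field_simp
  linear_combination (b ^ 4 * (r ^ 3 + a * r - b)) * hr

theorem mem_of_sq_mem_of_cubic_root {k K : Type*} [Field k] [Field K] [Algebra k K]
    (F : IntermediateField k K) {a b r : K} (ha : a ∈ F) (hb : b ∈ F) (hb0 : b ≠ 0)
    (hr : r ^ 3 + a * r + b = 0) (hr2 : r ^ 2 ∈ F) : r ∈ F := by
  have hne : r ^ 2 + a ≠ 0 := by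
    intro h
    exact hb0 (by linear_combination hr - r * h)
  have hr_eq : r = -b / (r ^ 2 + a) := by
    field_simp
    linear_combination hr
  rw [hr_eq]
  exact div_mem (neg_mem hb) (add_mem hr2 ha)

theorem adjoin_cubic_root_eq_adjoin_transform {k K : Type*} [Field k] [Field K] [Algebra k K]
    {A B : k} (hA : A ≠ 0) (hB : B ≠ 0) {r : K}
    (hr : r ^ 3 + algebraMap k K A * r + algebraMap k K B = 0) :
    k⟮r⟯ = k⟮-(algebraMap k K B / (algebraMap k K A * r)) ^ 2⟯ := by
  set a := algebraMap k K A
  set b := algebraMap k K B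
  set s := -(b / (a * r)) ^ 2
  have ha : a ≠ 0 := (map_ne_zero _).2 hA
  have hb : b ≠ 0 := (map_ne_zero _).2 hB
  have hr0 : r ≠ 0 := by
    rintro rfl
    exact hb (by simpa using hr)
  have hsq : r ^ 2 = -(b / a) ^ 2 / s := by
    simp only [s]
    field_simp
  have hs_mem : s ∈ k⟮r⟯ :=
    neg_mem (pow_mem (div_mem (algebraMap_mem _ B)
      (mul_mem (algebraMap_mem _ A) (IntermediateField.mem_adjoin_simple_self k r))) 2)
  have hr_mem : r ∈ k⟮s⟯ := by
    refine mem_of_sq_mem_of_cubic_root _ (algebraMap_mem _ A) (algebraMap_mem _ B) hb hr ?_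
    rw [hsq]
    exact div_mem (neg_mem (pow_mem (div_mem (algebraMap_mem _ B) (algebraMap_mem _ A)) 2))
      (IntermediateField.mem_adjoin_simple_self k s)
  exact le_antisymm (IntermediateField.adjoin_simple_le_iff.2 hr_mem)
    (IntermediateField.adjoin_simple_le_iff.2 hs_mem)

open Polynomial in
theorem stmt12_general (k K : Type*) [Field k] [Field K] [Algebra k K]
    (A B : k) (hA : A ≠ 0) (hB : B ≠ 0)
    (r : K) (hr : r^3 + algebraMap k K A * r + algebraMap k K B = 0) :
    (-(algebraMap k K B / (algebraMap k K A * r))^2)^3 +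
        (-(algebraMap k K B / (algebraMap k K A * r))^2 - algebraMap k K (B^2/A^3))^2 = 0 ∧
      IntermediateField.adjoin k {r} =
        IntermediateField.adjoin k {-(algebraMap k K B / (algebraMap k K A * r))^2} := by
  refine ⟨?_, adjoin_cubic_root_eq_adjoin_transform hA hB hr⟩
  rw [map_div₀, map_pow, map_pow]
  exact cubic_root_transform_eq_zero hr

open Polynomial in
/-- Let `k` be a field of characteristic neither 2 nor 3, `E : y² = x³ + Ax + B` with
`A ≠ 0`, `B ≠ 0` and `x³ + Ax + B` irreducible over `k` (no rational 2-torsion). If `r` is a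
root of `x³ + Ax + B` in an extension `K` (e.g. an algebraic closure), then
`s = −(B/(Ar))²` is a root of `x³ + (x − B²/A³)²`, and `k(r) = k(s)`. -/
theorem stmt12 (k K : Type*) [Field k] [Field K] [Algebra k K]
    (h2 : (2 : k) ≠ 0) (h3 : (3 : k) ≠ 0)
    (A B : k) (hA : A ≠ 0) (hB : B ≠ 0)
    (hirr : Irreducible (X^3 + C A * X + C B))
    (r : K) (hr : r^3 + algebraMap k K A * r + algebraMap k K B = 0) :
    (-(algebraMap k K B / (algebraMap k K A * r))^2)^3 +
        (-(algebraMap k K B / (algebraMap k K A * r))^2 - algebraMap k K (B^2/A^3))^2 = 0 ∧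
      IntermediateField.adjoin k {r} =
        IntermediateField.adjoin k {-(algebraMap k K B / (algebraMap k K A * r))^2} :=
  stmt12_general k K A B hA hB r hr
end

section
/- For every t in a field of characteristic ≠ 2 with t ∉ {0, 1, −1, 3, −3, 5}, the point (x,y) = ((t−3)(t+3)(t−1)(t+1), 4(t−3)(t+3)(t−1)(t+1)) is a point of order exactly 6 on the elliptic curve y^2 = x(x^2 + Ax + B) with A = −2t^4 + 12t^2 + 6 and B = (t+3)(t−3)(t+1)^3(t−1)^3. -/
/-!
The tangent to the curve at `P = (x_P, 4 x_P)` has slope `5 - t²` and meets the curve again at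
`(x_Q, -4 x_Q)` with `x_Q = (t² - 1)²`, so `2P = Q := (x_Q, 4 x_Q)`. Both `P` and `Q` lie on the
line `y = 4x`, whose third intersection with the curve is the 2-torsion point `T = (0, 0)`; hence
`3P = Q + P = T` and `6P = 0`, while `2P` and `3P` are affine points and so nonzero.
-/

/-- The universal elliptic curve `F₂,₆ᵗ : y² = x(x² + Ax + B)` with
`A = −2t⁴ + 12t² + 6` and `B = (t+3)(t−3)(t+1)³(t−1)³`. -/
def F26 (F : Type*) [Field F] (t : F) : WeierstrassCurve.Affine F :=
  { a₁ := 0, a₂ := -2*t^4 + 12*t^2 + 6, a₃ := 0,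
    a₄ := (t+3)*(t-3)*(t+1)^3*(t-1)^3, a₆ := 0 }

open WeierstrassCurve.Affine WeierstrassCurve.Affine.Point

theorem addOrderOf_eq_six_of_nsmul {G : Type*} [AddMonoid G] {P : G} (h6 : 6 • P = 0)
    (h2 : 2 • P ≠ 0) (h3 : 3 • P ≠ 0) : addOrderOf P = 6 := by
  refine addOrderOf_eq_of_nsmul_and_div_prime_nsmul (by norm_num) h6 fun p hp hdvd => ?_
  obtain rfl | rfl : p = 2 ∨ p = 3 := by
    have : p ≤ 6 := Nat.le_of_dvd (by norm_num) hdvd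
    interval_cases p <;> revert hp hdvd <;> decide
  exacts [h3, h2]

lemma eight_ne_zero_of_two_ne_zero {R : Type*} [Semiring R] [NoZeroDivisors R] (h : (2 : R) ≠ 0) :
    (8 : R) ≠ 0 := by
  simpa [show (8 : R) = 2 ^ 3 by norm_num] using h

namespace F26

variable {F : Type*} [Field F] {t : F}

lemma negY_eq (x y : F) : (F26 F t).negY x y = -y := by
  simp [WeierstrassCurve.Affine.negY, F26]

lemma four_mul_ne_negY (h2 : (2 : F) ≠ 0) {x : F} (hx : x ≠ 0) :
    4 * x ≠ (F26 F t).negY x (4 * x) := by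
  rw [negY_eq]
  intro h
  exact mul_ne_zero (eight_ne_zero_of_two_ne_zero h2) hx (by linear_combination h)

lemma nonsingular_of_y_eq_four_mul (h2 : (2 : F) ≠ 0) {x : F} (hx : x ≠ 0)
    (h : (F26 F t).Equation x (4 * x)) : (F26 F t).Nonsingular x (4 * x) :=
  (nonsingular_iff _ _).mpr ⟨h, Or.inr (four_mul_ne_negY h2 hx)⟩

def xP (t : F) : F := (t-3)*(t+3)*(t-1)*(t+1)

def xQ (t : F) : F := (t^2-1)^2

lemma sq_sub_one_ne_zero (hx : xP t ≠ 0) : t^2 - 1 ≠ 0 :=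
  fun h => hx (by unfold xP; linear_combination (t^2 - 9) * h)

lemma xQ_ne_zero (hx : xP t ≠ 0) : xQ t ≠ 0 :=
  pow_ne_zero 2 (sq_sub_one_ne_zero hx)

lemma xQ_ne_xP (h2 : (2 : F) ≠ 0) (hx : xP t ≠ 0) : xQ t ≠ xP t := fun h =>
  mul_ne_zero (eight_ne_zero_of_two_ne_zero h2) (sq_sub_one_ne_zero hx)
    (by unfold xP xQ at h; linear_combination h)

lemma nonsingular_P (h2 : (2 : F) ≠ 0) (hx : xP t ≠ 0) : (F26 F t).Nonsingular (xP t) (4 * xP t) :=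
  nonsingular_of_y_eq_four_mul h2 hx ((equation_iff _ _).mpr (by simp only [F26, xP]; ring))

lemma nonsingular_Q (h2 : (2 : F) ≠ 0) (hx : xP t ≠ 0) : (F26 F t).Nonsingular (xQ t) (4 * xQ t) :=
  nonsingular_of_y_eq_four_mul h2 (xQ_ne_zero hx)
    ((equation_iff _ _).mpr (by simp only [F26, xQ]; ring))

lemma nonsingular_zero_zero (hx : xP t ≠ 0) : (F26 F t).Nonsingular 0 0 := by
  refine nonsingular_zero.mpr ⟨rfl, Or.inr fun h => mul_ne_zero hx (xQ_ne_zero hx) ?_⟩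
  simp only [F26] at h
  unfold xP xQ
  linear_combination h

lemma some_add_self_P [DecidableEq F] (h2 : (2 : F) ≠ 0) (hx : xP t ≠ 0)
    {hP : (F26 F t).Nonsingular (xP t) (4 * xP t)} {hQ : (F26 F t).Nonsingular (xQ t) (4 * xQ t)} :
    some _ _ hP + some _ _ hP = some _ _ hQ := by
  have hy := four_mul_ne_negY (t := t) h2 hx
  have hslope : (F26 F t).slope (xP t) (xP t) (4 * xP t) (4 * xP t) = 5 - t^2 := by
    rw [slope_of_Y_ne rfl hy, div_eq_iff (sub_ne_zero.mpr hy), negY_eq]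
    simp only [F26, xP]; ring
  rw [add_self_of_Y_ne hy]
  congr 1 <;> simp only [addY, negAddY, addX, negY_eq, hslope] <;> simp only [F26, xP, xQ] <;> ring

lemma some_Q_add_some_P [DecidableEq F] (h2 : (2 : F) ≠ 0) (hx : xP t ≠ 0)
    {hQ : (F26 F t).Nonsingular (xQ t) (4 * xQ t)} {hP : (F26 F t).Nonsingular (xP t) (4 * xP t)}
    {hT : (F26 F t).Nonsingular 0 0} :
    some _ _ hQ + some _ _ hP = some _ _ hT := by
  have hne := xQ_ne_xP h2 hx
  have hslope : (F26 F t).slope (xQ t) (xP t) (4 * xQ t) (4 * xP t) = 4 := by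
    rw [slope_of_X_ne hne, div_eq_iff (sub_ne_zero.mpr hne)]
    ring
  rw [add_of_X_ne hne]
  congr 1 <;> simp only [addY, negAddY, addX, negY_eq, hslope] <;> simp only [F26, xP, xQ] <;> ring

lemma some_zero_add_self [DecidableEq F] {hT : (F26 F t).Nonsingular 0 0} :
    some _ _ hT + some _ _ hT = 0 :=
  add_self_of_Y_eq (by rw [negY_eq, _root_.neg_zero])

theorem addOrderOf_some_P [DecidableEq F] (h2 : (2 : F) ≠ 0) (hx : xP t ≠ 0)
    {hP : (F26 F t).Nonsingular (xP t) (4 * xP t)} : addOrderOf (some _ _ hP) = 6 := by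
  have h2P : 2 • some _ _ hP = some _ _ (nonsingular_Q h2 hx) := by
    rw [two_nsmul, some_add_self_P h2 hx]
  have h3P : 3 • some _ _ hP = some _ _ (nonsingular_zero_zero hx) := by
    rw [succ_nsmul, h2P, some_Q_add_some_P h2 hx]
  refine addOrderOf_eq_six_of_nsmul ?_ (h2P ▸ some_ne_zero _) (h3P ▸ some_ne_zero _)
  rw [show 6 = 3 * 2 from rfl, mul_nsmul, h3P, two_nsmul, some_zero_add_self]

end F26

open Classical in
theorem stmt14_general (F : Type*) [Field F] (h2 : (2 : F) ≠ 0) (t : F)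
    (h1 : t ≠ 1) (h1' : t ≠ -1) (h3 : t ≠ 3) (h3' : t ≠ -3) :
    ∃ h : (F26 F t).Nonsingular ((t-3)*(t+3)*(t-1)*(t+1)) (4*((t-3)*(t+3)*(t-1)*(t+1))),
      addOrderOf (WeierstrassCurve.Affine.Point.some _ _ h) = 6 := by
  have hx : F26.xP t ≠ 0 := by simp [F26.xP, sub_eq_zero, add_eq_zero_iff_eq_neg, *]
  exact ⟨F26.nonsingular_P h2 hx, F26.addOrderOf_some_P h2 hx⟩

open Classical in
/-- For every `t` in a field of characteristic ≠ 2 with `t ∉ {0, 1, −1, 3, −3, 5}`, the point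
`((t−3)(t+3)(t−1)(t+1), 4(t−3)(t+3)(t−1)(t+1))` is a point of order exactly 6 on the elliptic
curve `y² = x(x² + Ax + B)` with `A = −2t⁴ + 12t² + 6`, `B = (t+3)(t−3)(t+1)³(t−1)³`. -/
theorem stmt14 (F : Type*) [Field F] (h2 : (2 : F) ≠ 0) (t : F)
    (h0 : t ≠ 0) (h1 : t ≠ 1) (h1' : t ≠ -1) (h3 : t ≠ 3) (h3' : t ≠ -3) (h5 : t ≠ 5) :
    ∃ h : (F26 F t).Nonsingular ((t-3)*(t+3)*(t-1)*(t+1)) (4*((t-3)*(t+3)*(t-1)*(t+1))),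
      addOrderOf (WeierstrassCurve.Affine.Point.some _ _ h) = 6 :=
  stmt14_general F h2 t h1 h1' h3 h3'
end

section
/- For t a parameter over Q with the curve nonsingular, the point (x,y) = (−4(t−1)(3t^2−3t+1)t^5, 4(t−1)(3t^2−3t+1)t^5(2t^2−2t+1)(2t−1)) has order exactly 12 on the elliptic curve y^2 = x(x^2 + Ax + B) with A = 24t^8 − 96t^7 + 216t^6 − 312t^5 + 288t^4 − 168t^3 + 60t^2 − 12t + 1 and B = 16(3t^2−3t+1)^2(t−1)^6 t^6. -/
/-! Writing `P` for the given point, one computes `2P` and `4P` explicitly and finds that `2P + 4P`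
is the rational `2`-torsion point `(0, 0)`. Hence `12P = 0` while `4P` and `6P` are affine points,
so the order of `P` is exactly `12`. -/

/-- The universal elliptic curve `F₁₂ᵗ : y² = x(x² + Ax + B)` over `X₁(12)`, with
`A = 24t⁸ − 96t⁷ + 216t⁶ − 312t⁵ + 288t⁴ − 168t³ + 60t² − 12t + 1` and
`B = 16(3t² − 3t + 1)²(t−1)⁶t⁶`. -/
def F12 (t : ℚ) : WeierstrassCurve.Affine ℚ :=
  { a₁ := 0
    a₂ := 24*t^8 - 96*t^7 + 216*t^6 - 312*t^5 + 288*t^4 - 168*t^3 + 60*t^2 - 12*t + 1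
    a₃ := 0
    a₄ := 16*(3*t^2 - 3*t + 1)^2*(t - 1)^6*t^6
    a₆ := 0 }

lemma addOrderOf_eq_twelve {G : Type*} [AddMonoid G] {g : G} (h12 : 12 • g = 0)
    (h6 : 6 • g ≠ 0) (h4 : 4 • g ≠ 0) : addOrderOf g = 12 := by
  refine addOrderOf_eq_of_nsmul_and_div_prime_nsmul (by norm_num) h12 fun p hp hdvd => ?_
  have hp12 : p ≤ 12 := Nat.le_of_dvd (by norm_num) hdvd
  interval_cases p <;> simp_all +decide

lemma mul_sq_sub_mul_add_one_pos {K : Type*} [Field K] [LinearOrder K] [IsStrictOrderedRing K]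
    {a : K} (ha₀ : 0 ≤ a) (ha₄ : a < 4) (t : K) : 0 < a * t ^ 2 - a * t + 1 := by
  nlinarith [mul_nonneg ha₀ (sq_nonneg (2 * t - 1))]

namespace WeierstrassCurve.Affine

variable {F : Type*} [Field F] {W : Affine F}

lemma nonsingular_of_Y_ne_negY {x y : F} (h : W.Equation x y) (hy : y ≠ W.negY x y) :
    W.Nonsingular x y :=
  (nonsingular_iff x y).2 ⟨h, Or.inr hy⟩

namespace Point

variable [DecidableEq F]

lemma some_add_self_eq_some {x₁ y₁ x₃ y₃ ℓ : F} {h₁ : W.Nonsingular x₁ y₁}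
    {h₃ : W.Nonsingular x₃ y₃} (hy : y₁ ≠ W.negY x₁ y₁)
    (hℓ : ℓ * (y₁ - W.negY x₁ y₁) = 3 * x₁ ^ 2 + 2 * W.a₂ * x₁ + W.a₄ - W.a₁ * y₁)
    (hx₃ : W.addX x₁ x₁ ℓ = x₃) (hy₃ : W.addY x₁ x₁ y₁ ℓ = y₃) :
    some _ _ h₁ + some _ _ h₁ = some _ _ h₃ := by
  have hslope : W.slope x₁ x₁ y₁ y₁ = ℓ := by
    rw [slope_of_Y_ne rfl hy, div_eq_iff (sub_ne_zero.2 hy), hℓ]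
  rw [add_self_of_Y_ne hy]
  congr 1 <;> simp only [hslope, hx₃, hy₃]

lemma some_add_some_eq_some_of_X_ne {x₁ y₁ x₂ y₂ x₃ y₃ ℓ : F} {h₁ : W.Nonsingular x₁ y₁}
    {h₂ : W.Nonsingular x₂ y₂} {h₃ : W.Nonsingular x₃ y₃} (hx : x₁ ≠ x₂)
    (hℓ : ℓ * (x₁ - x₂) = y₁ - y₂)
    (hx₃ : W.addX x₁ x₂ ℓ = x₃) (hy₃ : W.addY x₁ x₂ y₁ ℓ = y₃) :
    some _ _ h₁ + some _ _ h₂ = some _ _ h₃ := by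
  have hslope : W.slope x₁ x₂ y₁ y₂ = ℓ := by
    rw [slope_of_X_ne hx, div_eq_iff (sub_ne_zero.2 hx), hℓ]
  rw [add_of_X_ne hx]
  congr 1 <;> simp only [hslope, hx₃, hy₃]

end Point

end WeierstrassCurve.Affine

open WeierstrassCurve.Affine

namespace F12

/- `(xₙ t, yₙ t)` is `n • P`, where `P = (x₁ t, y₁ t)` is the point of the theorem. -/
def x₁ (t : ℚ) : ℚ := -4*(t-1)*(3*t^2-3*t+1)*t^5
def y₁ (t : ℚ) : ℚ := 4*(t-1)*(3*t^2-3*t+1)*t^5*(2*t^2-2*t+1)*(2*t-1)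
def x₂ (t : ℚ) : ℚ := 4*t^2*(t-1)^2*(3*t^2-3*t+1)^2
def y₂ (t : ℚ) : ℚ := -4*t^2*(t-1)^2*(2*t-1)^2*(2*t^2-2*t+1)*(3*t^2-3*t+1)^2
def x₄ (t : ℚ) : ℚ := 4*t^4*(t-1)^4
def y₄ (t : ℚ) : ℚ := -4*t^4*(t-1)^4*(2*t-1)^2*(2*t^2-2*t+1)

variable {t : ℚ}

lemma negY_eq (x y : ℚ) : (F12 t).negY x y = -y := by
  simp only [negY, F12]; ring

lemma Y_ne_negY_iff {x y : ℚ} : y ≠ (F12 t).negY x y ↔ y ≠ 0 := by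
  rw [negY_eq, ne_eq, self_eq_neg]

lemma nonsingular_of_Y_ne_zero {x y : ℚ} (h : (F12 t).Equation x y) (hy : y ≠ 0) :
    (F12 t).Nonsingular x y :=
  nonsingular_of_Y_ne_negY h (Y_ne_negY_iff.2 hy)

lemma quadratics_ne_zero (t : ℚ) : 2*t^2 - 2*t + 1 ≠ 0 ∧ 3*t^2 - 3*t + 1 ≠ 0 :=
  ⟨(mul_sq_sub_mul_add_one_pos (by norm_num) (by norm_num) t).ne',
    (mul_sq_sub_mul_add_one_pos (by norm_num) (by norm_num) t).ne'⟩

lemma nonsingular_zero_zero (h0 : t ≠ 0) (h1 : t ≠ 1) : (F12 t).Nonsingular 0 0 := by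
  refine nonsingular_zero.2 ⟨rfl, Or.inr ?_⟩
  simp [F12, h0, sub_eq_zero, h1, (quadratics_ne_zero t).2]

lemma equation_x₁_y₁ (t : ℚ) : (F12 t).Equation (x₁ t) (y₁ t) := by
  rw [equation_iff]; simp only [F12, x₁, y₁]; ring

lemma equation_x₂_y₂ (t : ℚ) : (F12 t).Equation (x₂ t) (y₂ t) := by
  rw [equation_iff]; simp only [F12, x₂, y₂]; ring

lemma equation_x₄_y₄ (t : ℚ) : (F12 t).Equation (x₄ t) (y₄ t) := by
  rw [equation_iff]; simp only [F12, x₄, y₄]; ring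

lemma y₁_ne_zero (h0 : t ≠ 0) (h1 : t ≠ 1) (h2 : 2*t - 1 ≠ 0) : y₁ t ≠ 0 := by
  simp [y₁, h0, sub_eq_zero, h1, h2, quadratics_ne_zero t]

lemma y₂_ne_zero (h0 : t ≠ 0) (h1 : t ≠ 1) (h2 : 2*t - 1 ≠ 0) : y₂ t ≠ 0 := by
  simp [y₂, h0, sub_eq_zero, h1, h2, quadratics_ne_zero t]

lemma y₄_ne_zero (h0 : t ≠ 0) (h1 : t ≠ 1) (h2 : 2*t - 1 ≠ 0) : y₄ t ≠ 0 := by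
  simp [y₄, h0, sub_eq_zero, h1, h2, quadratics_ne_zero t]

lemma x₂_ne_x₄ (h0 : t ≠ 0) (h1 : t ≠ 1) (h2 : 2*t - 1 ≠ 0) : x₂ t ≠ x₄ t := by
  rw [← sub_ne_zero, show x₂ t - x₄ t = 4*t^2*(t-1)^2*(2*t-1)^2*(2*t^2-2*t+1) by
    simp only [x₂, x₄]; ring]
  simp [h0, sub_eq_zero, h1, h2, quadratics_ne_zero t]

lemma nonsingular_x₁_y₁ (h0 : t ≠ 0) (h1 : t ≠ 1) (h2 : 2*t - 1 ≠ 0) :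
    (F12 t).Nonsingular (x₁ t) (y₁ t) :=
  nonsingular_of_Y_ne_zero (equation_x₁_y₁ t) (y₁_ne_zero h0 h1 h2)

lemma nonsingular_x₂_y₂ (h0 : t ≠ 0) (h1 : t ≠ 1) (h2 : 2*t - 1 ≠ 0) :
    (F12 t).Nonsingular (x₂ t) (y₂ t) :=
  nonsingular_of_Y_ne_zero (equation_x₂_y₂ t) (y₂_ne_zero h0 h1 h2)

lemma nonsingular_x₄_y₄ (h0 : t ≠ 0) (h1 : t ≠ 1) (h2 : 2*t - 1 ≠ 0) :
    (F12 t).Nonsingular (x₄ t) (y₄ t) :=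
  nonsingular_of_Y_ne_zero (equation_x₄_y₄ t) (y₄_ne_zero h0 h1 h2)

lemma some_x₁_add_self {h : (F12 t).Nonsingular (x₁ t) (y₁ t)}
    {h' : (F12 t).Nonsingular (x₂ t) (y₂ t)} (hy : y₁ t ≠ 0) :
    Point.some _ _ h + Point.some _ _ h = Point.some _ _ h' :=
  Point.some_add_self_eq_some (ℓ := 6*t^4 - 16*t^3 + 14*t^2 - 6*t + 1) (Y_ne_negY_iff.2 hy)
    (by simp only [negY, F12, x₁, y₁]; ring) (by simp only [addX, F12, x₁, x₂]; ring)
    (by simp only [addY, negAddY, addX, negY, F12, x₁, y₁, y₂]; ring)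

lemma some_x₂_add_self {h : (F12 t).Nonsingular (x₂ t) (y₂ t)}
    {h' : (F12 t).Nonsingular (x₄ t) (y₄ t)} (hy : y₂ t ≠ 0) :
    Point.some _ _ h + Point.some _ _ h = Point.some _ _ h' :=
  Point.some_add_self_eq_some (ℓ := -10*t^4 + 20*t^3 - 16*t^2 + 6*t - 1) (Y_ne_negY_iff.2 hy)
    (by simp only [negY, F12, x₂, y₂]; ring) (by simp only [addX, F12, x₂, x₄]; ring)
    (by simp only [addY, negAddY, addX, negY, F12, x₂, y₂, y₄]; ring)

lemma some_x₂_add_some_x₄ {h : (F12 t).Nonsingular (x₂ t) (y₂ t)}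
    {h' : (F12 t).Nonsingular (x₄ t) (y₄ t)} {h₀ : (F12 t).Nonsingular 0 0}
    (hx : x₂ t ≠ x₄ t) :
    Point.some _ _ h + Point.some _ _ h' = Point.some _ _ h₀ :=
  Point.some_add_some_eq_some_of_X_ne (ℓ := -8*t^4 + 16*t^3 - 14*t^2 + 6*t - 1) hx
    (by simp only [x₂, y₂, x₄, y₄]; ring) (by simp only [addX, F12, x₂, x₄]; ring)
    (by simp only [addY, negAddY, addX, negY, F12, x₂, y₂, x₄]; ring)

lemma some_zero_add_self {h₀ : (F12 t).Nonsingular 0 0} :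
    Point.some _ _ h₀ + Point.some _ _ h₀ = 0 :=
  Point.add_self_of_Y_eq (by rw [negY_eq, neg_zero])

end F12

/-- For `t ∈ ℚ` with the curve nonsingular (`t ∉ {0,1}` and
`(6t²−6t+1)(2t²−2t+1)(2t−1) ≠ 0`), the point
`(−4(t−1)(3t²−3t+1)t⁵, 4(t−1)(3t²−3t+1)t⁵(2t²−2t+1)(2t−1))` has order exactly 12 on `F₁₂ᵗ`. -/
theorem stmt15 (t : ℚ) (h0 : t ≠ 0) (h1 : t ≠ 1)
    (hΔ : (6*t^2 - 6*t + 1)*(2*t^2 - 2*t + 1)*(2*t - 1) ≠ 0) :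
    ∃ h : (F12 t).Nonsingular (-4*(t-1)*(3*t^2-3*t+1)*t^5)
      (4*(t-1)*(3*t^2-3*t+1)*t^5*(2*t^2-2*t+1)*(2*t-1)),
      addOrderOf (WeierstrassCurve.Affine.Point.some _ _ h) = 12 := by
  open F12 in
  have h2 : 2*t - 1 ≠ 0 := right_ne_zero_of_mul hΔ
  have hP := nonsingular_x₁_y₁ h0 h1 h2
  have hP₂ := nonsingular_x₂_y₂ h0 h1 h2
  have hP₄ := nonsingular_x₄_y₄ h0 h1 h2
  have hT := nonsingular_zero_zero h0 h1
  have two : 2 • Point.some _ _ hP = Point.some _ _ hP₂ := by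
    rw [two_nsmul, some_x₁_add_self (y₁_ne_zero h0 h1 h2)]
  have four : 4 • Point.some _ _ hP = Point.some _ _ hP₄ := by
    rw [show 4 = 2 * 2 from rfl, mul_nsmul, two, two_nsmul,
      some_x₂_add_self (y₂_ne_zero h0 h1 h2)]
  have six : 6 • Point.some _ _ hP = Point.some _ _ hT := by
    rw [show 6 = 2 + 4 from rfl, add_nsmul, two, four, some_x₂_add_some_x₄ (x₂_ne_x₄ h0 h1 h2)]
  refine ⟨hP, (addOrderOf_eq_twelve ?_ ?_ ?_ : addOrderOf (Point.some _ _ hP) = 12)⟩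
  · rw [show 12 = 6 * 2 from rfl, mul_nsmul, six, two_nsmul, some_zero_add_self]
  · rw [six]; exact Point.some_ne_zero hT
  · rw [four]; exact Point.some_ne_zero hP₄
end
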